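/- arXiv:1504.01705 — 4 statements merged into one kernel-verified Lean document; each statement's English description precedes it below -/
import Mathlib

section
/- Let A be an M×N real matrix such that ‖AX‖_F ≤ √(1+δ)·‖X‖_F for every N×L matrix X with at most R+K nonzero rows, where δ ∈ (0,1). Then for every N×L matrix X, ‖AX‖_F ≤ √(1+δ)·(‖X‖_F + (1/√(R+K))·‖X‖_{2,1}), where ‖X‖_{2,1} denotes the sum over rows of the row ℓ₂-norms. -/
open scoped BigOperators
open Matrix

noncomputable def frob {m n : Type*} [Fintype m] [Fintype n] (X : Matrix m n ℝ) : ℝ :=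
  Real.sqrt (∑ i, ∑ j, (X i j) ^ 2)

noncomputable def rowNorm {m n : Type*} [Fintype n] (X : Matrix m n ℝ) (i : m) : ℝ :=
  Real.sqrt (∑ j, (X i j) ^ 2)

noncomputable def norm21 {m n : Type*} [Fintype m] [Fintype n] (X : Matrix m n ℝ) : ℝ :=
  ∑ i, rowNorm X i

noncomputable def restrictRows {m n : Type*} (X : Matrix m n ℝ) (S : Set m) : Matrix m n ℝ :=
  fun i j => S.indicator (fun i' => X i' j) i

noncomputable def vnorm {m : Type*} [Fintype m] (v : m → ℝ) : ℝ :=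
  Real.sqrt (∑ i, (v i) ^ 2)

/-- `X` has at most `s` nonzero rows. -/
def rowSparse {m n : Type*} (X : Matrix m n ℝ) (s : ℕ) : Prop :=
  {i | X i ≠ 0}.ncard ≤ s

/-- Column submatrix of `A` with columns indexed by `S`. -/
def colSub {M N : ℕ} (A : Matrix (Fin M) (Fin N) ℝ) (S : Finset (Fin N)) :
    Matrix (Fin M) {j // j ∈ S} ℝ :=
  A.submatrix id (fun j => (j : Fin N))

/-- `D` is the Moore–Penrose pseudo-inverse of `A` (the four Penrose conditions). -/
def IsPinv {m n : Type*} [Fintype m] [Fintype n] (A : Matrix m n ℝ) (D : Matrix n m ℝ) : Prop :=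
  A * D * A = A ∧ D * A * D = D ∧ (A * D)ᵀ = A * D ∧ (D * A)ᵀ = D * A

/-- Restricted isometry property of order `s` with constant `δ`. -/
def RIP {M N : ℕ} (A : Matrix (Fin M) (Fin N) ℝ) (s : ℕ) (δ : ℝ) : Prop :=
  ∀ x : Fin N → ℝ, {i | x i ≠ 0}.ncard ≤ s →
    (1 - δ) * (∑ i, (x i) ^ 2) ≤ (∑ i, (A.mulVec x i) ^ 2) ∧
      (∑ i, (A.mulVec x i) ^ 2) ≤ (1 + δ) * (∑ i, (x i) ^ 2)

section helpers
variable {m n : Type*} [Fintype m] [Fintype n]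

lemma frob_eq_norm (X : Matrix m n ℝ) :
    frob X = ‖(WithLp.equiv 2 ((m × n) → ℝ)).symm (fun p => X p.1 p.2)‖ := by
  rw [EuclideanSpace.norm_eq]
  simp [frob, Real.norm_eq_abs, sq_abs, Fintype.sum_prod_type, WithLp.equiv_symm_apply, PiLp.toLp_apply]

lemma frob_add_le (P Q : Matrix m n ℝ) : frob (P + Q) ≤ frob P + frob Q := by
  rw [frob_eq_norm, frob_eq_norm, frob_eq_norm]
  exact norm_add_le ((WithLp.equiv 2 ((m × n) → ℝ)).symm fun p => P p.1 p.2)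
    ((WithLp.equiv 2 ((m × n) → ℝ)).symm fun p => Q p.1 p.2)

lemma frob_mono (P Q : Matrix m n ℝ) (h : ∀ i j, (P i j)^2 ≤ (Q i j)^2) :
    frob P ≤ frob Q := by
  apply Real.sqrt_le_sqrt
  exact Finset.sum_le_sum fun i _ => Finset.sum_le_sum fun j _ => h i j

lemma rowNorm_nonneg (X : Matrix m n ℝ) (i : m) : 0 ≤ rowNorm X i := Real.sqrt_nonneg _

lemma rowNorm_restrict (X : Matrix m n ℝ) (S : Set m) [DecidablePred (· ∈ S)] (i : m) :
    rowNorm (restrictRows X S) i = if i ∈ S then rowNorm X i else 0 := by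
  by_cases h : i ∈ S <;> simp [rowNorm, restrictRows, Set.indicator_apply, h]

lemma frob_rows (X : Matrix m n ℝ) :
    frob X = Real.sqrt (∑ i, (rowNorm X i)^2) := by
  unfold frob rowNorm
  congr 1
  exact Finset.sum_congr rfl fun i _ =>
    (Real.sq_sqrt (Finset.sum_nonneg fun j _ => sq_nonneg _)).symm

lemma restrict_add (X : Matrix m n ℝ) (S : Set m) :
    restrictRows X S + restrictRows X Sᶜ = X := by
  ext i j
  by_cases h : i ∈ S <;>
    simp [restrictRows, Set.indicator_apply, h]

end helpers

lemma exists_top {ι : Type*} [DecidableEq ι] (f : ι → ℝ) (T : Finset ι) :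
    ∀ s, s ≤ T.card → ∃ S ⊆ T, S.card = s ∧
      ∀ i ∈ T, i ∉ S → ∀ j ∈ S, f i ≤ f j := by
  intro s
  induction s with
  | zero => exact fun _ => ⟨∅, by simp⟩
  | succ s ih =>
    intro hs
    obtain ⟨S, hST, hcard, hmax⟩ := ih (le_trans (Nat.le_succ s) hs)
    have hne : (T \ S).Nonempty := by
      rw [← Finset.card_pos, Finset.card_sdiff_of_subset hST, hcard]
      omega
    obtain ⟨b, hb, hbmax⟩ := Finset.exists_max_image (T \ S) f hne
    have hbT : b ∈ T := (Finset.mem_sdiff.mp hb).1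
    have hbS : b ∉ S := (Finset.mem_sdiff.mp hb).2
    refine ⟨insert b S, ?_, ?_, ?_⟩
    · exact Finset.insert_subset hbT hST
    · rw [Finset.card_insert_of_notMem hbS, hcard]
    · intro i hi hiS j hj
      rcases Finset.mem_insert.mp hj with rfl | hjS
      · exact hbmax i (Finset.mem_sdiff.mpr ⟨hi, fun h => hiS (Finset.mem_insert_of_mem h)⟩)
      · exact hmax i hi (fun h => hiS (Finset.mem_insert_of_mem h)) j hjS

lemma norm21_nonneg' {m n : Type*} [Fintype m] [Fintype n] (X : Matrix m n ℝ) : 0 ≤ norm21 X :=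
  Finset.sum_nonneg fun i _ => rowNorm_nonneg X i

lemma rowNorm_zero_of {m n : Type*} [Fintype n] (X : Matrix m n ℝ) (i : m) (h : X i = 0) :
    rowNorm X i = 0 := by
  have : ∀ j, X i j = 0 := fun j => congrFun h j
  simp [rowNorm, this]

open Classical in
lemma frob_le_sqrt_card {N L : ℕ} (X : Matrix (Fin N) (Fin L) ℝ) (s : ℕ) (c : ℝ) (hc : 0 ≤ c)
    (hrow : ∀ i, rowNorm X i ≤ c)
    (hcard : (Finset.univ.filter (fun i => X i ≠ 0)).card ≤ s) :
    frob X ≤ Real.sqrt s * c := by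
  rw [frob_rows]
  have h0 : ∑ i, (rowNorm X i)^2
      = ∑ i ∈ Finset.univ.filter (fun i => X i ≠ 0), (rowNorm X i)^2 := by
    refine (Finset.sum_subset (Finset.subset_univ _) ?_).symm
    intro i _ hi
    simp only [Finset.mem_filter, Finset.mem_univ, true_and, not_not] at hi
    rw [rowNorm_zero_of X i hi]; ring
  have h1 : ∑ i, (rowNorm X i)^2 ≤ (s : ℝ) * c^2 := by
    rw [h0]
    calc ∑ i ∈ Finset.univ.filter (fun i => X i ≠ 0), (rowNorm X i)^2
        ≤ ∑ _i ∈ Finset.univ.filter (fun i => X i ≠ 0), c^2 :=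
          Finset.sum_le_sum fun i _ => pow_le_pow_left₀ (rowNorm_nonneg X i) (hrow i) 2
      _ = (Finset.univ.filter (fun i => X i ≠ 0)).card * c^2 := by
          rw [Finset.sum_const, nsmul_eq_mul]
      _ ≤ (s : ℝ) * c^2 := by
          apply mul_le_mul_of_nonneg_right _ (sq_nonneg c)
          exact_mod_cast hcard
  calc Real.sqrt (∑ i, (rowNorm X i)^2) ≤ Real.sqrt ((s:ℝ) * c^2) := Real.sqrt_le_sqrt h1
    _ = Real.sqrt s * c := by
        rw [Real.sqrt_mul (Nat.cast_nonneg s), Real.sqrt_sq hc]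

open Classical in
lemma key {M N L : ℕ} (s : ℕ) (hs : 0 < s) (A : Matrix (Fin M) (Fin N) ℝ) (C : ℝ) (hC : 0 ≤ C)
    (hA : ∀ X : Matrix (Fin N) (Fin L) ℝ, rowSparse X s → frob (A * X) ≤ C * frob X) :
    ∀ n (X : Matrix (Fin N) (Fin L) ℝ),
      (Finset.univ.filter (fun i => X i ≠ 0)).card ≤ n →
      ∀ c, 0 ≤ c → (∀ i, rowNorm X i ≤ c) →
      frob (A * X) ≤ C * (min (frob X) (Real.sqrt s * c) + norm21 X / Real.sqrt s) := by
  classical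
  have hsq : (0:ℝ) < Real.sqrt s := Real.sqrt_pos.mpr (by exact_mod_cast hs)
  intro n
  induction n using Nat.strong_induction_on with
  | _ n ih =>
  intro X hn c hc hrow
  by_cases hbase : (Finset.univ.filter (fun i => X i ≠ 0)).card ≤ s
  · have hsp : rowSparse X s := by
      unfold rowSparse
      have he : {i | X i ≠ 0} = ↑(Finset.univ.filter (fun i => X i ≠ 0)) := by
        ext i; simp
      rw [he, Set.ncard_coe_finset]; exact hbase
    have h2 : frob X ≤ Real.sqrt s * c := frob_le_sqrt_card X s c hc hrow hbase
    calc frob (A*X) ≤ C * frob X := hA X hsp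
      _ ≤ C * (min (frob X) (Real.sqrt s * c) + norm21 X / Real.sqrt s) := by
          apply mul_le_mul_of_nonneg_left _ hC
          rw [min_eq_left h2]
          have : 0 ≤ norm21 X / Real.sqrt s := div_nonneg (norm21_nonneg' X) hsq.le
          linarith
  · push_neg at hbase
    set F := Finset.univ.filter (fun i => X i ≠ 0) with hF
    obtain ⟨S, hST, hcard, hmax⟩ := exists_top (fun i => rowNorm X i) F s hbase.le
    have hSne : S.Nonempty := Finset.card_pos.mp (by rw [hcard]; exact hs)
    obtain ⟨j₀, hj₀, hj₀min⟩ := Finset.exists_min_image S (fun i => rowNorm X i) hSne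
    set c' := rowNorm X j₀ with hc'def
    have hc'0 : 0 ≤ c' := rowNorm_nonneg X j₀
    set Y := restrictRows X ↑S with hYdef
    set Z := restrictRows X (↑S : Set (Fin N))ᶜ with hZdef
    have hXYZ : X = Y + Z := (restrict_add X ↑S).symm
    have hrY : ∀ i, rowNorm Y i = if i ∈ S then rowNorm X i else 0 := by
      intro i
      rw [hYdef, rowNorm_restrict]
      simp
    have hrZ : ∀ i, rowNorm Z i = if i ∈ S then 0 else rowNorm X i := by
      intro i
      rw [hZdef, rowNorm_restrict]
      by_cases h : i ∈ S <;> simp [h]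
    -- sparsity of Y
    have hspY : rowSparse Y s := by
      unfold rowSparse
      have hsub : {i | Y i ≠ 0} ⊆ ↑S := by
        intro i hi
        by_contra h
        apply hi
        funext j
        simp [hYdef, restrictRows, Set.indicator_apply, h]
      calc {i | Y i ≠ 0}.ncard ≤ (↑S : Set (Fin N)).ncard :=
            Set.ncard_le_ncard hsub (Set.toFinite _)
        _ = s := by rw [Set.ncard_coe_finset, hcard]
    -- support of Z
    have hZsupp : (Finset.univ.filter (fun i => Z i ≠ 0)) ⊆ F \ S := by
      intro i hi
      simp only [Finset.mem_filter, Finset.mem_univ, true_and] at hi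
      rw [Finset.mem_sdiff]
      constructor
      · rw [hF, Finset.mem_filter]
        refine ⟨Finset.mem_univ i, ?_⟩
        intro hXi
        apply hi
        funext j
        simp [hZdef, restrictRows, Set.indicator_apply, congrFun hXi j]
      · intro hiS
        apply hi
        funext j
        simp [hZdef, restrictRows, Set.indicator_apply, hiS]
    have hZcard : (Finset.univ.filter (fun i => Z i ≠ 0)).card ≤ n - s := by
      calc (Finset.univ.filter (fun i => Z i ≠ 0)).card ≤ (F \ S).card :=
            Finset.card_le_card hZsupp
        _ = F.card - s := by rw [Finset.card_sdiff_of_subset hST, hcard]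
        _ ≤ n - s := by omega
    have hnlt : n - s < n := Nat.sub_lt (by omega) hs
    -- rows of Z bounded by c'
    have hrowZ : ∀ i, rowNorm Z i ≤ c' := by
      intro i
      rw [hrZ i]
      by_cases h : i ∈ S
      · simp [h, hc'0]
      · simp only [h, if_false]
        by_cases hXi : X i = 0
        · rw [rowNorm_zero_of X i hXi]; exact hc'0
        · exact hmax i (by rw [hF, Finset.mem_filter]; exact ⟨Finset.mem_univ i, hXi⟩) h j₀ hj₀
    have hIZ := ih (n - s) hnlt Z hZcard c' hc'0 hrowZ
    -- frob Y ≤ frob X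
    have hfYX : frob Y ≤ frob X := by
      apply frob_mono
      intro i j
      by_cases h : i ∈ (↑S : Set (Fin N)) <;>
        simp [hYdef, restrictRows, Set.indicator_apply, h, sq_nonneg]
    -- frob Y ≤ √s * c
    have hfYc : frob Y ≤ Real.sqrt s * c := by
      apply frob_le_sqrt_card Y s c hc
      · intro i
        rw [hrY i]
        by_cases h : i ∈ S <;> simp [h, hrow i, hc]
      · calc (Finset.univ.filter (fun i => Y i ≠ 0)).card ≤ S.card := by
              apply Finset.card_le_card
              intro i hi
              simp only [Finset.mem_filter, Finset.mem_univ, true_and] at hi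
              by_contra h
              apply hi
              funext j
              simp [hYdef, restrictRows, Set.indicator_apply, h]
          _ = s := hcard
    -- norm21 split
    have hnsplit : norm21 Y + norm21 Z = norm21 X := by
      unfold norm21
      rw [← Finset.sum_add_distrib]
      apply Finset.sum_congr rfl
      intro i _
      rw [hrY i, hrZ i]
      by_cases h : i ∈ S <;> simp [h]
    -- s * c' ≤ norm21 Y
    have hsc' : (s : ℝ) * c' ≤ norm21 Y := by
      have h1 : norm21 Y = ∑ i ∈ S, rowNorm X i := by
        unfold norm21
        rw [Finset.sum_congr rfl (fun i _ => hrY i), Finset.sum_ite_mem,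
          Finset.univ_inter]
      rw [h1, ← hcard]
      calc (S.card : ℝ) * c' = ∑ _i ∈ S, c' := by rw [Finset.sum_const, nsmul_eq_mul]
        _ ≤ ∑ i ∈ S, rowNorm X i := Finset.sum_le_sum fun i hi => hj₀min i hi
    have hsc'2 : Real.sqrt s * c' ≤ norm21 Y / Real.sqrt s := by
      rw [le_div_iff₀ hsq]
      have hss : Real.sqrt s * Real.sqrt s = (s:ℝ) := Real.mul_self_sqrt (Nat.cast_nonneg s)
      nlinarith
    -- final assembly
    have hfrobAY : frob (A * Y) ≤ C * frob Y := hA Y hspY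
    calc frob (A * X) = frob (A * Y + A * Z) := by rw [← Matrix.mul_add, ← hXYZ]
      _ ≤ frob (A * Y) + frob (A * Z) := frob_add_le _ _
      _ ≤ C * frob Y + C * (min (frob Z) (Real.sqrt s * c') + norm21 Z / Real.sqrt s) := by
          exact add_le_add hfrobAY hIZ
      _ ≤ C * (min (frob X) (Real.sqrt s * c) + norm21 X / Real.sqrt s) := by
          rw [← mul_add]
          apply mul_le_mul_of_nonneg_left _ hC
          have h1 : min (frob Z) (Real.sqrt s * c') ≤ norm21 Y / Real.sqrt s :=
            le_trans (min_le_right _ _) hsc'2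
          have h2 : frob Y ≤ min (frob X) (Real.sqrt s * c) := le_min hfYX hfYc
          have h3 : norm21 X / Real.sqrt s = norm21 Y / Real.sqrt s + norm21 Z / Real.sqrt s := by
            rw [← hnsplit]; ring
          linarith

theorem stmt0 {M N L R K : ℕ} (hR : 0 < R) (hK : 0 < K) (hRK : R + K ≤ N)
    (A : Matrix (Fin M) (Fin N) ℝ) (δ : ℝ) (hδ0 : 0 < δ) (hδ1 : δ < 1)
    (hA : ∀ X : Matrix (Fin N) (Fin L) ℝ, rowSparse X (R + K) →
      frob (A * X) ≤ Real.sqrt (1 + δ) * frob X)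
    (X : Matrix (Fin N) (Fin L) ℝ) :
    frob (A * X) ≤ Real.sqrt (1 + δ) *
      (frob X + (1 / Real.sqrt (R + K)) * norm21 X) := by
  classical
  have hs : 0 < R + K := by omega
  have hC : 0 ≤ Real.sqrt (1 + δ) := Real.sqrt_nonneg _
  have hrow : ∀ i, rowNorm X i ≤ norm21 X := fun i =>
    Finset.single_le_sum (fun j _ => rowNorm_nonneg X j) (Finset.mem_univ i)
  have h := key (R + K) hs A (Real.sqrt (1 + δ)) hC hA N X
    (le_trans (Finset.card_filter_le _ _) (by simp)) (norm21 X) (norm21_nonneg' X) hrow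
  have e : (((R + K : ℕ)) : ℝ) = ((R : ℝ) + (K : ℝ)) := by push_cast; ring
  rw [e] at h
  refine le_trans h ?_
  apply mul_le_mul_of_nonneg_left _ hC
  have h1 : min (frob X) (Real.sqrt ((R:ℝ)+(K:ℝ)) * norm21 X) ≤ frob X := min_le_left _ _
  have h2 : norm21 X / Real.sqrt ((R:ℝ)+(K:ℝ))
      = 1 / Real.sqrt ((R:ℝ)+(K:ℝ)) * norm21 X := by ring
  linarith
end

section
/- Let X ∈ ℝ^{N×L} be a matrix lying in the set Q = {X : ‖X‖_F + (1/√s)·‖X‖_{2,1} ≤ 1} for a positive integer s. Then X can be written as a convex combination of matrices each of which has at most s nonzero rows and unit Frobenius norm; in particular, partitioning the row indices of X into blocks I₀, I₁, ..., I_J of size s by decreasing row ℓ₂-norm, the coefficients λ_j = ‖X|_{I_j}‖_F satisfy Σ_{j=0}^J λ_j ≤ 1. -/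
open scoped BigOperators
open Matrix

lemma frob_smul {m n : Type*} [Fintype m] [Fintype n] (c : ℝ) (X : Matrix m n ℝ) :
    frob (c • X) = |c| * frob X := by
  unfold frob
  rw [← Real.sqrt_sq_eq_abs, ← Real.sqrt_mul (sq_nonneg c)]
  congr 1
  simp [Finset.mul_sum, mul_pow]

lemma frob_restrict {m n : Type*} [Fintype m] [Fintype n]
    (X : Matrix m n ℝ) (S : Set m) (T : Finset m) (hT : ∀ i, i ∈ T ↔ i ∈ S) :
    frob (restrictRows X S) = Real.sqrt (∑ i ∈ T, ∑ j, (X i j) ^ 2) := by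
  unfold frob restrictRows
  congr 1
  rw [← Finset.sum_subset (Finset.subset_univ T)]
  · refine Finset.sum_congr rfl fun i hi => Finset.sum_congr rfl fun j _ => ?_
    rw [Set.indicator_of_mem ((hT i).mp hi)]
  · intro i _ hi
    simp [Set.indicator_of_notMem (fun h => hi ((hT i).mpr h))]

lemma restrict_eq_zero {m n : Type*} [Fintype m] [Fintype n]
    (X : Matrix m n ℝ) (S : Set m) (T : Finset m) (hT : ∀ i, i ∈ T ↔ i ∈ S)
    (h : frob (restrictRows X S) = 0) : restrictRows X S = 0 := by
  rw [frob_restrict X S T hT] at h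
  have h2 : ∑ i ∈ T, ∑ j, (X i j) ^ 2 = 0 :=
    le_antisymm (Real.sqrt_eq_zero'.mp h)
      (Finset.sum_nonneg fun i _ => Finset.sum_nonneg fun j _ => sq_nonneg _)
  have h3 : ∀ i ∈ T, ∀ j, X i j = 0 := by
    intro i hi j
    have := (Finset.sum_eq_zero_iff_of_nonneg
      (fun i _ => Finset.sum_nonneg fun j _ => sq_nonneg (X i j))).mp h2 i hi
    have := (Finset.sum_eq_zero_iff_of_nonneg
      (fun j _ => sq_nonneg (X i j))).mp this j (Finset.mem_univ j)
    exact pow_eq_zero_iff (two_ne_zero) |>.mp this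
  funext i j
  show S.indicator (fun i' => X i' j) i = 0
  by_cases hi : i ∈ S
  · rw [Set.indicator_of_mem hi]; exact h3 i ((hT i).mpr hi) j
  · rw [Set.indicator_of_notMem hi]

theorem stmt1 {N L s : ℕ} (hs : 0 < s) (hN : 0 < N) (hL : 0 < L)
    (X : Matrix (Fin N) (Fin L) ℝ)
    (hX : frob X + (1 / Real.sqrt s) * norm21 X ≤ 1)
    (J : ℕ) (I : ℕ → Set (Fin N))
    (hdisj : ∀ j k, j ≠ k → Disjoint (I j) (I k))
    (hcover : {i | X i ≠ 0} ⊆ ⋃ j ∈ Finset.range (J + 1), I j)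
    (hfull : ∀ j < J, (I j).ncard = s)
    (hcard : ∀ j, (I j).ncard ≤ s)
    (horder : ∀ j, ∀ i ∈ I (j + 1), ∀ i' ∈ I j, rowNorm X i ≤ rowNorm X i') :
    (∑ j ∈ Finset.range (J + 1), frob (restrictRows X (I j))) ≤ 1 ∧
      X ∈ convexHull ℝ {Y : Matrix (Fin N) (Fin L) ℝ | rowSparse Y s ∧ frob Y = 1} := by
  classical
  have hs0 : (s : ℝ) ≠ 0 := Nat.cast_ne_zero.mpr hs.ne'
  have hsqs : 0 < Real.sqrt s := Real.sqrt_pos.mpr (by exact_mod_cast hs)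
  set r : Fin N → ℝ := rowNorm X with hrdef
  have hrnn : ∀ i, 0 ≤ r i := fun i => Real.sqrt_nonneg _
  have hrsq : ∀ i, r i ^ 2 = ∑ j, (X i j) ^ 2 := fun i =>
    Real.sq_sqrt (Finset.sum_nonneg fun j _ => sq_nonneg _)
  let F : ℕ → Finset (Fin N) := fun j => (Set.toFinite (I j)).toFinset
  have hF : ∀ j (i : Fin N), i ∈ F j ↔ i ∈ I j := fun j i => Set.Finite.mem_toFinset _
  have hFcard : ∀ j, (F j).card = (I j).ncard := fun j =>
    (Set.ncard_eq_toFinset_card (I j) (Set.toFinite (I j))).symm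
  set lam : ℕ → ℝ := fun j => frob (restrictRows X (I j)) with hlamdef
  have hlamnn : ∀ j, 0 ≤ lam j := fun j => Real.sqrt_nonneg _
  have hlameq : ∀ j, lam j = Real.sqrt (∑ i ∈ F j, ∑ j', (X i j') ^ 2) :=
    fun j => frob_restrict X (I j) (F j) (hF j)
  -- Part 1
  have h0 : lam 0 ≤ frob X := by
    rw [hlameq]
    apply Real.sqrt_le_sqrt
    exact Finset.sum_le_sum_of_subset_of_nonneg (Finset.subset_univ _)
      (fun i _ _ => Finset.sum_nonneg fun j _ => sq_nonneg _)
  have hstep : ∀ j < J, lam (j + 1) ≤ (Real.sqrt s)⁻¹ * ∑ i ∈ F j, r i := by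
    intro j hj
    set T := ∑ i ∈ F j, r i with hTdef
    have hTnn : 0 ≤ T := Finset.sum_nonneg fun i _ => hrnn i
    have hravg : ∀ i ∈ F (j + 1), r i ≤ (s : ℝ)⁻¹ * T := by
      intro i hi
      have hsmul : (s : ℝ) * r i ≤ T := by
        have hc : (F j).card = s := by rw [hFcard]; exact hfull j hj
        calc (s : ℝ) * r i = ∑ _i' ∈ F j, r i := by
              rw [Finset.sum_const, hc, nsmul_eq_mul]
          _ ≤ T := Finset.sum_le_sum fun i' hi' =>
              horder j i ((hF _ i).mp hi) i' ((hF _ i').mp hi')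
      rw [inv_mul_eq_div, le_div_iff₀ (by exact_mod_cast hs)]
      linarith [hsmul]
    rw [hlameq]
    have hsq : ∑ i ∈ F (j + 1), ∑ j', (X i j') ^ 2 ≤ ((Real.sqrt s)⁻¹ * T) ^ 2 := by
      have h1 : ∀ i ∈ F (j + 1), ∑ j', (X i j') ^ 2 ≤ ((s : ℝ)⁻¹ * T) ^ 2 := by
        intro i hi
        rw [← hrsq i]
        exact pow_le_pow_left₀ (hrnn i) (hravg i hi) 2
      have hcardle : ((F (j + 1)).card : ℝ) ≤ (s : ℝ) := by
        exact_mod_cast (hFcard (j + 1)) ▸ hcard (j + 1)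
      calc ∑ i ∈ F (j + 1), ∑ j', (X i j') ^ 2
          ≤ (F (j + 1)).card • (((s : ℝ)⁻¹ * T) ^ 2) := Finset.sum_le_card_nsmul _ _ _ h1
        _ = ((F (j + 1)).card : ℝ) * (((s : ℝ)⁻¹ * T) ^ 2) := by rw [nsmul_eq_mul]
        _ ≤ (s : ℝ) * (((s : ℝ)⁻¹ * T) ^ 2) :=
            mul_le_mul_of_nonneg_right hcardle (sq_nonneg _)
        _ = ((Real.sqrt s)⁻¹ * T) ^ 2 := by
            rw [mul_pow, mul_pow, inv_pow, inv_pow, Real.sq_sqrt (Nat.cast_nonneg s)]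
            field_simp
    calc Real.sqrt (∑ i ∈ F (j + 1), ∑ j', (X i j') ^ 2)
        ≤ Real.sqrt (((Real.sqrt s)⁻¹ * T) ^ 2) := Real.sqrt_le_sqrt hsq
      _ = (Real.sqrt s)⁻¹ * T := Real.sqrt_sq (mul_nonneg (inv_nonneg.mpr hsqs.le) hTnn)
  have hFdisj : ∀ j k : ℕ, j ≠ k → Disjoint (F j) (F k) := by
    intro j k hjk
    rw [Set.Finite.disjoint_toFinset]
    exact hdisj j k hjk
  have h3 : ∑ j ∈ Finset.range J, ∑ i ∈ F j, r i ≤ norm21 X := by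
    rw [← Finset.sum_biUnion (fun j _ k _ hjk => hFdisj j k hjk)]
    exact Finset.sum_le_sum_of_subset_of_nonneg (Finset.subset_univ _)
      (fun i _ _ => hrnn i)
  have hpart1 : ∑ j ∈ Finset.range (J + 1), lam j ≤ 1 := by
    rw [Finset.sum_range_succ']
    have h2 : ∑ j ∈ Finset.range J, lam (j + 1)
        ≤ (Real.sqrt s)⁻¹ * ∑ j ∈ Finset.range J, ∑ i ∈ F j, r i := by
      rw [Finset.mul_sum]
      exact Finset.sum_le_sum fun j hj => hstep j (Finset.mem_range.mp hj)
    have h4 : (Real.sqrt s)⁻¹ * (∑ j ∈ Finset.range J, ∑ i ∈ F j, r i)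
        ≤ (Real.sqrt s)⁻¹ * norm21 X :=
      mul_le_mul_of_nonneg_left h3 (by positivity)
    have h5 : (1 / Real.sqrt s) = (Real.sqrt s)⁻¹ := one_div _
    rw [h5] at hX
    linarith
  refine ⟨hpart1, ?_⟩
  -- Part 2
  set SS : Set (Matrix (Fin N) (Fin L) ℝ) :=
    {Y : Matrix (Fin N) (Fin L) ℝ | rowSparse Y s ∧ frob Y = 1} with hSS
  set i0 : Fin N := ⟨0, hN⟩
  set j0 : Fin L := ⟨0, hL⟩
  set Z : Matrix (Fin N) (Fin L) ℝ := fun i j => if i = i0 ∧ j = j0 then 1 else 0 with hZdef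
  have hZfrob : frob Z = 1 := by
    have h1 : (∑ i, ∑ j, (Z i j) ^ 2) = 1 := by
      have : ∀ i j, (Z i j) ^ 2 = if i = i0 ∧ j = j0 then (1:ℝ) else 0 := by
        intro i j; simp only [hZdef]; split <;> norm_num
      simp only [this]
      rw [Finset.sum_eq_single i0]
      · rw [Finset.sum_eq_single j0]
        · simp
        · intro b _ hb; simp [hb]
        · intro h; exact absurd (Finset.mem_univ j0) h
      · intro b _ hb; exact Finset.sum_eq_zero fun c _ => by simp [hb]
      · intro h; exact absurd (Finset.mem_univ i0) h
    unfold frob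
    rw [h1, Real.sqrt_one]
  have hZsupp : {i | Z i ≠ 0} ⊆ {i0} := by
    intro i hi
    by_contra h
    apply hi
    funext j
    simp only [hZdef]
    rw [if_neg]
    · rfl
    · rintro ⟨h1, -⟩; exact h h1
  have hZsp : rowSparse Z s := by
    have := Set.ncard_le_ncard hZsupp (Set.finite_singleton i0)
    calc {i | Z i ≠ 0}.ncard ≤ ({i0} : Set (Fin N)).ncard := this
      _ = 1 := Set.ncard_singleton i0
      _ ≤ s := hs
  have hZmem : Z ∈ SS := ⟨hZsp, hZfrob⟩
  have hnegZmem : -Z ∈ SS := by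
    constructor
    · have : {i | (-Z) i ≠ 0} = {i | Z i ≠ 0} := by
        ext i; simp [Matrix.neg_apply]
        constructor
        · intro h; intro h2; apply h; funext j; simp [congrFun h2 j]
        · intro h; intro h2; apply h; funext j
          have := congrFun h2 j
          simpa using this
      rw [rowSparse, this]; exact hZsp
    · have : (-Z) = (-1 : ℝ) • Z := by funext i j; simp
      rw [this, frob_smul]
      simp [hZfrob]
  set μ : ℝ := 1 - ∑ j ∈ Finset.range (J + 1), lam j with hμdef
  have hμnn : 0 ≤ μ := by simp only [hμdef]; linarith
  set p : ℕ → Matrix (Fin N) (Fin L) ℝ := fun j =>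
    if j ≤ J then (if lam j = 0 then Z else (lam j)⁻¹ • restrictRows X (I j))
    else if j = J + 1 then Z else -Z with hpdef
  set w : ℕ → ℝ := fun j => if j ≤ J then lam j else μ / 2 with hwdef
  have hw0 : ∀ j ∈ Finset.range (J + 3), 0 ≤ w j := by
    intro j _
    simp only [hwdef]
    split
    · exact hlamnn j
    · linarith
  have hwsum : ∑ j ∈ Finset.range (J + 3), w j = 1 := by
    have e1 : (J + 3) = (J + 2) + 1 := by ring
    have e2 : (J + 2) = (J + 1) + 1 := by ring
    rw [e1, Finset.sum_range_succ, e2, Finset.sum_range_succ]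
    have hA : ∑ j ∈ Finset.range (J + 1), w j = ∑ j ∈ Finset.range (J + 1), lam j := by
      refine Finset.sum_congr rfl fun j hj => ?_
      have hjle : j ≤ J := by have := Finset.mem_range.mp hj; omega
      simp only [hwdef]
      rw [if_pos hjle]
    have hB : w (J + 1) = μ / 2 := by simp only [hwdef]; rw [if_neg (by omega)]
    have hC : w (J + 2) = μ / 2 := by simp only [hwdef]; rw [if_neg (by omega)]
    rw [hA, hB, hC, hμdef]
    ring
  have hpmem : ∀ j ∈ Finset.range (J + 3), p j ∈ SS := by
    intro j _
    simp only [hpdef]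
    split
    · split
      · exact hZmem
      · rename_i hjle hlam0
        have hlampos : 0 < lam j := lt_of_le_of_ne (hlamnn j) (Ne.symm hlam0)
        constructor
        · -- rowSparse
          have hsub : {i | ((lam j)⁻¹ • restrictRows X (I j)) i ≠ 0} ⊆ I j := by
            intro i hi
            by_contra h
            apply hi
            have hrow : restrictRows X (I j) i = 0 := by
              funext j'
              exact Set.indicator_of_notMem h _
            show (lam j)⁻¹ • restrictRows X (I j) i = 0
            rw [hrow, smul_zero]
          calc {i | ((lam j)⁻¹ • restrictRows X (I j)) i ≠ 0}.ncard
              ≤ (I j).ncard := Set.ncard_le_ncard hsub (Set.toFinite _)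
            _ ≤ s := hcard j
        · rw [frob_smul, abs_of_pos (inv_pos.mpr hlampos)]
          show (lam j)⁻¹ * lam j = 1
          exact inv_mul_cancel₀ hlam0
    · split
      · exact hZmem
      · exact hnegZmem
  have hXsum : ∑ j ∈ Finset.range (J + 1), restrictRows X (I j) = X := by
    funext i j'
    rw [Matrix.sum_apply]
    show (∑ k ∈ Finset.range (J + 1), (I k).indicator (fun i' => X i' j') i) = X i j'
    by_cases hXi : X i = 0
    · have hXij : X i j' = 0 := congrFun hXi j'
      rw [hXij]
      apply Finset.sum_eq_zero
      intro k _
      by_cases h : i ∈ I k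
      · rw [Set.indicator_of_mem h]; exact hXij
      · rw [Set.indicator_of_notMem h]
    · obtain ⟨k0, hk0mem, hik0⟩ : ∃ k0 ∈ Finset.range (J + 1), i ∈ I k0 := by
        have := hcover hXi
        simpa using this
      rw [Finset.sum_eq_single k0]
      · exact Set.indicator_of_mem hik0 _
      · intro k hk hkk0
        exact Set.indicator_of_notMem
          (fun h => Set.disjoint_left.mp (hdisj k k0 hkk0) h hik0) _
      · intro h; exact absurd hk0mem h
  have hwp : ∑ j ∈ Finset.range (J + 3), w j • p j = X := by
    have e1 : (J + 3) = (J + 2) + 1 := by ring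
    have e2 : (J + 2) = (J + 1) + 1 := by ring
    rw [e1, Finset.sum_range_succ, e2, Finset.sum_range_succ]
    have hA : ∑ j ∈ Finset.range (J + 1), w j • p j
        = ∑ j ∈ Finset.range (J + 1), restrictRows X (I j) := by
      refine Finset.sum_congr rfl fun j hj => ?_
      have hjle : j ≤ J := by
        have := Finset.mem_range.mp hj; omega
      simp only [hwdef, hpdef]
      rw [if_pos hjle, if_pos hjle]
      by_cases hl : lam j = 0
      · rw [if_pos hl, hl, zero_smul]
        exact (restrict_eq_zero X (I j) (F j) (hF j) hl).symm
      · rw [if_neg hl, smul_smul, mul_inv_cancel₀ hl, one_smul]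
    have hB : w (J + 1) • p (J + 1) = (μ / 2) • Z := by
      simp only [hwdef, hpdef]
      rw [if_neg (by omega : ¬ (J+1 ≤ J)), if_neg (by omega : ¬ (J+1 ≤ J))]
      simp
    have hC : w (J + 2) • p (J + 2) = (μ / 2) • (-Z) := by
      simp only [hwdef, hpdef]
      rw [if_neg (by omega), if_neg (by omega), if_neg (by omega)]
    rw [hA, hXsum, hB, hC, smul_neg]
    abel
  have hcm := Finset.centerMass_mem_convexHull (Finset.range (J + 3)) hw0
    (by rw [hwsum]; norm_num) hpmem
  rwa [Finset.centerMass_eq_of_sum_1 _ _ hwsum, hwp] at hcm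
end

section
/- Let A ∈ ℝ^{M×N} satisfy RIP of order R+K with constant δ < 1/2, let X be K-row-sparse with support T, T̂_i a set of at most R column indices, and B = AX + W. Then the residual R_i = B − A_{T̂_i} A_{T̂_i}† B satisfies ‖R_i‖_F ≥ ((1−2δ)/√(1−δ))·‖X_{T̂_iᶜ,:}‖_F − ‖W‖_F. -/
open scoped BigOperators
open Matrix

lemma sq_sum_nonneg {ι : Type*} [Fintype ι] (f : ι → ℝ) : 0 ≤ ∑ i, f i ^ 2 :=
  Finset.sum_nonneg fun i _ => sq_nonneg _

lemma vnorm_nonneg {ι : Type*} [Fintype ι] (f : ι → ℝ) : 0 ≤ vnorm f := Real.sqrt_nonneg _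

lemma sq_vnorm {ι : Type*} [Fintype ι] (f : ι → ℝ) : vnorm f ^ 2 = ∑ i, f i ^ 2 :=
  Real.sq_sqrt (sq_sum_nonneg f)

lemma le_of_sq_le_sq' {a b : ℝ} (hb : 0 ≤ b) (h : a^2 ≤ b^2) (ha : 0 ≤ a) : a ≤ b := by
  nlinarith

lemma cs {ι : Type*} [Fintype ι] (f g : ι → ℝ) : ∑ i, f i * g i ≤ vnorm f * vnorm g := by
  have h := Finset.sum_mul_sq_le_sq_mul_sq Finset.univ f g
  have h2 : |∑ i, f i * g i| ≤ vnorm f * vnorm g := by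
    rw [← Real.sqrt_sq_eq_abs]
    unfold vnorm
    rw [← Real.sqrt_mul (sq_sum_nonneg f)]
    exact Real.sqrt_le_sqrt h
  linarith [le_abs_self (∑ i, f i * g i)]

lemma vnorm_triangle {ι : Type*} [Fintype ι] (f g : ι → ℝ) :
    vnorm (f + g) ≤ vnorm f + vnorm g := by
  have h1 := cs f g
  have hf := sq_vnorm f
  have hg := sq_vnorm g
  have expand : ∑ i, (f i + g i)^2 ≤ (vnorm f + vnorm g)^2 := by
    have e : ∑ i, (f i + g i)^2 = ∑ i, f i ^2 + 2 * ∑ i, f i * g i + ∑ i, g i ^2 := by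
      rw [Finset.mul_sum, ← Finset.sum_add_distrib, ← Finset.sum_add_distrib]
      exact Finset.sum_congr rfl fun i _ => by ring
    nlinarith
  have : vnorm (f + g) = Real.sqrt (∑ i, (f i + g i)^2) := by simp [vnorm]
  rw [this]
  calc Real.sqrt (∑ i, (f i + g i)^2) ≤ Real.sqrt ((vnorm f + vnorm g)^2) :=
        Real.sqrt_le_sqrt expand
    _ = vnorm f + vnorm g := Real.sqrt_sq (add_nonneg (vnorm_nonneg f) (vnorm_nonneg g))

lemma vnorm_sub_ge {ι : Type*} [Fintype ι] (f g : ι → ℝ) :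
    vnorm f - vnorm g ≤ vnorm (f - g) := by
  have h := vnorm_triangle (f - g) g
  simp only [sub_add_cancel] at h
  linarith

lemma frob_eq_vnorm {m n : Type*} [Fintype m] [Fintype n] (X : Matrix m n ℝ) :
    frob X = vnorm (fun p : m × n => X p.1 p.2) := by
  rw [frob, vnorm, Fintype.sum_prod_type]

lemma frob_nonneg {m n : Type*} [Fintype m] [Fintype n] (X : Matrix m n ℝ) : 0 ≤ frob X :=
  Real.sqrt_nonneg _

lemma vnorm_neg {ι : Type*} [Fintype ι] (f : ι → ℝ) : vnorm (-f) = vnorm f := by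
  simp [vnorm]

lemma frob_add_ge {m n : Type*} [Fintype m] [Fintype n] (G H : Matrix m n ℝ) :
    frob G - frob H ≤ frob (G + H) := by
  rw [frob_eq_vnorm, frob_eq_vnorm, frob_eq_vnorm]
  have h := vnorm_sub_ge (fun p : m × n => G p.1 p.2) (-(fun p : m × n => H p.1 p.2))
  rw [vnorm_neg] at h
  have e : (fun p : m × n => G p.1 p.2) - (-(fun p : m × n => H p.1 p.2))
      = fun p : m × n => (G + H) p.1 p.2 := by
    funext p; simp [Matrix.add_apply]
  rw [e] at h
  linarith

lemma frob_sq_cols {m n : Type*} [Fintype m] [Fintype n] (X : Matrix m n ℝ) :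
    frob X = Real.sqrt (∑ j, ∑ i, X i j ^ 2) := by
  rw [frob, Finset.sum_comm]

lemma frob_col_mono {m m' n : Type*} [Fintype m] [Fintype m'] [Fintype n]
    (c : ℝ) (hc : 0 ≤ c) (Y : Matrix m' n ℝ) (Z : Matrix m n ℝ)
    (h : ∀ j, c^2 * ∑ i, (Y i j)^2 ≤ ∑ i, (Z i j)^2) : c * frob Y ≤ frob Z := by
  rw [frob_sq_cols, frob_sq_cols]
  have h2 : c^2 * ∑ j, ∑ i, Y i j ^2 ≤ ∑ j, ∑ i, Z i j ^2 := by
    rw [Finset.mul_sum]; exact Finset.sum_le_sum fun j _ => h j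
  calc c * Real.sqrt (∑ j, ∑ i, Y i j ^2) = Real.sqrt (c^2 * ∑ j, ∑ i, Y i j ^2) := by
        rw [Real.sqrt_mul (sq_nonneg c), Real.sqrt_sq hc]
    _ ≤ Real.sqrt (∑ j, ∑ i, Z i j ^2) := Real.sqrt_le_sqrt h2

lemma proj_self {M : ℕ} (P : Matrix (Fin M) (Fin M) ℝ) (hsym : Pᵀ = P) (hidem : P * P = P)
    (w : Fin M → ℝ) : ∑ i, (P *ᵥ w) i ^ 2 = ∑ i, (P *ᵥ w) i * w i := by
  have h1 : ∑ i, (P *ᵥ w) i ^ 2 = (P *ᵥ w) ⬝ᵥ (P *ᵥ w) := by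
    simp [dotProduct, sq]
  have h2 : (P *ᵥ w) ⬝ᵥ (P *ᵥ w) = ((P *ᵥ w) ᵥ* P) ⬝ᵥ w := Matrix.dotProduct_mulVec _ _ _
  have h3 : (P *ᵥ w) ᵥ* P = P *ᵥ w := by
    rw [← Matrix.mulVec_transpose, Matrix.mulVec_mulVec, hsym, hidem]
  rw [h1, h2, h3]
  simp [dotProduct]

lemma proj_contract {M : ℕ} (P : Matrix (Fin M) (Fin M) ℝ) (hsym : Pᵀ = P) (hidem : P * P = P)
    (w : Fin M → ℝ) : ∑ i, (w i - (P *ᵥ w) i) ^ 2 ≤ ∑ i, w i ^ 2 := by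
  have hp := proj_self P hsym hidem w
  have hnn := sq_sum_nonneg (fun i => (P *ᵥ w) i)
  have e : ∑ i, (w i - (P *ᵥ w) i) ^ 2
      = ∑ i, w i ^ 2 - 2 * ∑ i, (P *ᵥ w) i * w i + ∑ i, (P *ᵥ w) i ^ 2 := by
    rw [Finset.mul_sum, ← Finset.sum_sub_distrib, ← Finset.sum_add_distrib]
    exact Finset.sum_congr rfl fun i _ => by ring
  linarith

lemma polar0 {M N s : ℕ} (A : Matrix (Fin M) (Fin N) ℝ) (δ : ℝ) (hRIP : RIP A s δ)
    (u x : Fin N → ℝ) (hdisj : ∀ i, u i = 0 ∨ x i = 0)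
    (hcard : {i | u i ≠ 0 ∨ x i ≠ 0}.ncard ≤ s) :
    ∑ i, (A *ᵥ u) i * (A *ᵥ x) i ≤ δ / 2 * ((∑ i, u i ^ 2) + ∑ i, x i ^ 2) := by
  have hsupp : ∀ v : Fin N → ℝ, (∀ i, v i ≠ 0 → (u i ≠ 0 ∨ x i ≠ 0)) →
      {i | v i ≠ 0}.ncard ≤ s := fun v hv =>
    le_trans (Set.ncard_le_ncard (fun i hi => hv i hi) (Set.toFinite _)) hcard
  have h1 := hRIP (u + x) (hsupp _ (fun i hi => by
    by_contra hc; push_neg at hc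
    exact hi (by simp [Pi.add_apply, hc.1, hc.2])))
  have h2 := hRIP (u - x) (hsupp _ (fun i hi => by
    by_contra hc; push_neg at hc
    exact hi (by simp [Pi.sub_apply, hc.1, hc.2])))
  have e1 : ∑ i, (u + x) i ^ 2 = ∑ i, u i ^ 2 + ∑ i, x i ^ 2 := by
    rw [← Finset.sum_add_distrib]
    exact Finset.sum_congr rfl fun i _ => by
      rcases hdisj i with h | h <;> simp [Pi.add_apply, h]
  have e2 : ∑ i, (u - x) i ^ 2 = ∑ i, u i ^ 2 + ∑ i, x i ^ 2 := by
    rw [← Finset.sum_add_distrib]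
    exact Finset.sum_congr rfl fun i _ => by
      rcases hdisj i with h | h <;> simp [Pi.sub_apply, h]
  have m1 : A.mulVec (u + x) = A *ᵥ u + A *ᵥ x := Matrix.mulVec_add A u x
  have m2 : A.mulVec (u - x) = A *ᵥ u - A *ᵥ x := Matrix.mulVec_sub A u x
  rw [m1, e1] at h1
  rw [m2, e2] at h2
  have e3 : ∑ i, (A *ᵥ u + A *ᵥ x) i ^ 2
      = ∑ i, (A *ᵥ u) i ^ 2 + 2 * ∑ i, (A *ᵥ u) i * (A *ᵥ x) i + ∑ i, (A *ᵥ x) i ^ 2 := by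
    rw [Finset.mul_sum, ← Finset.sum_add_distrib, ← Finset.sum_add_distrib]
    exact Finset.sum_congr rfl fun i _ => by simp [Pi.add_apply]; ring
  have e4 : ∑ i, (A *ᵥ u - A *ᵥ x) i ^ 2
      = ∑ i, (A *ᵥ u) i ^ 2 - 2 * ∑ i, (A *ᵥ u) i * (A *ᵥ x) i + ∑ i, (A *ᵥ x) i ^ 2 := by
    rw [Finset.mul_sum, ← Finset.sum_sub_distrib, ← Finset.sum_add_distrib]
    exact Finset.sum_congr rfl fun i _ => by simp [Pi.sub_apply]; ring
  rw [e3] at h1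
  rw [e4] at h2
  linarith [h1.2, h2.1]

lemma polar {M N s : ℕ} (A : Matrix (Fin M) (Fin N) ℝ) (δ : ℝ) (hδ0 : 0 ≤ δ) (hRIP : RIP A s δ)
    (u x : Fin N → ℝ) (hdisj : ∀ i, u i = 0 ∨ x i = 0)
    (hcard : {i | u i ≠ 0 ∨ x i ≠ 0}.ncard ≤ s) :
    ∑ i, (A *ᵥ u) i * (A *ᵥ x) i ≤ δ * vnorm u * vnorm x := by
  have vzero : ∀ v : Fin N → ℝ, vnorm v = 0 → v = 0 := by
    intro v hv
    funext i
    have h0 : ∑ i, v i ^ 2 = 0 := by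
      have := sq_vnorm v; rw [hv] at this; simpa using this.symm
    have := (Finset.sum_eq_zero_iff_of_nonneg (fun i _ => sq_nonneg (v i))).mp h0 i
      (Finset.mem_univ i)
    exact pow_eq_zero_iff two_ne_zero |>.mp this
  have vnorm_zero : vnorm (0 : Fin N → ℝ) = 0 := by simp [vnorm]
  by_cases hu : vnorm u = 0
  · rw [vzero u hu]
    simp [Matrix.mulVec_zero, vnorm_zero]
  by_cases hx : vnorm x = 0
  · rw [vzero x hx]
    simp [Matrix.mulVec_zero, vnorm_zero]
  have ha : 0 < vnorm u := lt_of_le_of_ne (vnorm_nonneg u) (Ne.symm hu)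
  have hb : 0 < vnorm x := lt_of_le_of_ne (vnorm_nonneg x) (Ne.symm hx)
  set a := vnorm u with hadef
  set b := vnorm x with hbdef
  set c := Real.sqrt (b / a) with hcdef
  have hcpos : 0 < c := Real.sqrt_pos.mpr (div_pos hb ha)
  have hc2 : c ^ 2 = b / a := Real.sq_sqrt (le_of_lt (div_pos hb ha))
  have hdisj' : ∀ i, (c • u) i = 0 ∨ (c⁻¹ • x) i = 0 := fun i => by
    rcases hdisj i with h | h
    · left; simp [h]
    · right; simp [h]
  have hcard' : {i | (c • u) i ≠ 0 ∨ (c⁻¹ • x) i ≠ 0}.ncard ≤ s := by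
    refine le_trans (Set.ncard_le_ncard ?_ (Set.toFinite _)) hcard
    intro i hi
    rcases hi with h | h
    · left; intro h0; exact h (by simp [h0])
    · right; intro h0; exact h (by simp [h0])
  have key := polar0 A δ hRIP (c • u) (c⁻¹ • x) hdisj' hcard'
  have l1 : ∑ i, (A *ᵥ (c • u)) i * (A *ᵥ (c⁻¹ • x)) i = ∑ i, (A *ᵥ u) i * (A *ᵥ x) i := by
    rw [Matrix.mulVec_smul, Matrix.mulVec_smul]
    refine Finset.sum_congr rfl fun i _ => ?_
    simp only [Pi.smul_apply, smul_eq_mul]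
    rw [show c * (A *ᵥ u) i * (c⁻¹ * (A *ᵥ x) i) = (c * c⁻¹) * ((A *ᵥ u) i * (A *ᵥ x) i)
      from by ring, mul_inv_cancel₀ (ne_of_gt hcpos), one_mul]
  have l2 : ∑ i, (c • u) i ^ 2 = a * b := by
    simp only [Pi.smul_apply, smul_eq_mul, mul_pow]
    rw [← Finset.mul_sum, ← sq_vnorm u, ← hadef, hc2]
    field_simp
  have l3 : ∑ i, (c⁻¹ • x) i ^ 2 = a * b := by
    simp only [Pi.smul_apply, smul_eq_mul, mul_pow]
    rw [← Finset.mul_sum, ← sq_vnorm x, ← hbdef, inv_pow, hc2]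
    field_simp
  rw [l1, l2, l3] at key
  linarith

set_option maxHeartbeats 1600000 in
theorem stmt9 {M N L R K : ℕ} (A : Matrix (Fin M) (Fin N) ℝ) (δ : ℝ)
    (hδ0 : 0 ≤ δ) (hδ : δ < 1/2) (hRIP : RIP A (R + K) δ)
    (X : Matrix (Fin N) (Fin L) ℝ) (T : Finset (Fin N))
    (hsupp : ∀ i, X i ≠ 0 → i ∈ T) (hTK : T.card ≤ K)
    (Ti : Finset (Fin N)) (hTiR : Ti.card ≤ R)
    (Di : Matrix {j // j ∈ Ti} (Fin M) ℝ)
    (hDi : IsPinv (colSub A Ti) Di) (hDiI : Di * colSub A Ti = 1)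
    (W B : Matrix (Fin M) (Fin L) ℝ) (hB : B = A * X + W) :
    ((1 - 2 * δ) / Real.sqrt (1 - δ)) * frob (restrictRows X {i | i ∉ Ti}) - frob W ≤
      frob (B - colSub A Ti * (Di * B)) := by
  have hδ1 : 0 < 1 - δ := by linarith
  have h12 : 0 < 1 - 2 * δ := by linarith
  set s := Real.sqrt (1 - δ) with hsdef
  have hs : 0 < s := Real.sqrt_pos.mpr hδ1
  have hs2 : s ^ 2 = 1 - δ := Real.sq_sqrt (le_of_lt hδ1)
  set c := (1 - 2 * δ) / s with hcdef
  have hc0 : 0 ≤ c := le_of_lt (div_pos h12 hs)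
  clear_value s c
  set P := colSub A Ti * Di with hPdef
  have hPsym : Pᵀ = P := hDi.2.2.1
  have hPP : P * P = P := by
    rw [hPdef, ← Matrix.mul_assoc, hDi.1]
  clear_value P
  set Xout := restrictRows X {i | i ∉ Ti} with hXout
  set Xin := restrictRows X {i | i ∈ Ti} with hXin
  clear_value Xout Xin
  have hXsplit : X = Xin + Xout := by
    ext i j
    by_cases h : i ∈ Ti <;>
      simp [hXin, hXout, restrictRows, Set.indicator_apply, Set.mem_setOf_eq, h,
        Matrix.add_apply]
  have hAXin : A * Xin = colSub A Ti * (Matrix.of fun (j' : {j // j ∈ Ti}) l => X j'.1 l) := by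
    ext i l
    rw [Matrix.mul_apply, Matrix.mul_apply]
    have hterm : ∀ j, A i j * Xin j l = if j ∈ Ti then A i j * X j l else 0 := fun j => by
      by_cases h : j ∈ Ti <;> simp [hXin, restrictRows, Set.indicator_apply, Set.mem_setOf_eq, h]
    calc ∑ j, A i j * Xin j l = ∑ j, if j ∈ Ti then A i j * X j l else 0 :=
          Finset.sum_congr rfl fun j _ => hterm j
      _ = ∑ j ∈ Finset.univ ∩ Ti, A i j * X j l := Finset.sum_ite_mem _ _ _
      _ = ∑ j ∈ Ti, A i j * X j l := by rw [Finset.univ_inter]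
      _ = ∑ j' : {j // j ∈ Ti}, A i j'.1 * X j'.1 l := (Finset.sum_coe_sort Ti _).symm
      _ = ∑ j' : {j // j ∈ Ti}, colSub A Ti i j' *
            (Matrix.of fun (j' : {j // j ∈ Ti}) l => X j'.1 l) j' l := by
          refine Finset.sum_congr rfl fun j' _ => ?_
          simp [colSub, Matrix.submatrix_apply, Matrix.of_apply]
  have hPAin : P * (A * Xin) = A * Xin := by
    rw [hAXin, hPdef, ← Matrix.mul_assoc, hDi.1]
  have hGH : B - colSub A Ti * (Di * B) = (A * Xout - P * (A * Xout)) + (W - P * W) := by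
    have hPB : colSub A Ti * (Di * B) = P * B := by rw [hPdef, Matrix.mul_assoc]
    rw [hPB, hB, hXsplit]
    simp only [Matrix.mul_add]
    rw [hPAin]
    abel
  -- the column lemma
  have colb : ∀ x : Fin N → ℝ, (∀ i, x i ≠ 0 → (i ∈ T ∧ i ∉ Ti)) →
      c * vnorm x ≤ vnorm (A *ᵥ x - P *ᵥ (A *ᵥ x)) := by
    intro x hx
    set y := A *ᵥ x with hy
    have hxcard : {i | x i ≠ 0}.ncard ≤ R + K := by
      calc {i | x i ≠ 0}.ncard ≤ (↑T : Set (Fin N)).ncard :=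
            Set.ncard_le_ncard (fun i hi => (hx i hi).1) (Set.toFinite _)
        _ = T.card := Set.ncard_coe_finset T
        _ ≤ K := hTK
        _ ≤ R + K := Nat.le_add_left K R
    have hRIPx := (hRIP x hxcard).1
    set z := Di *ᵥ y with hz
    set u : Fin N → ℝ := fun j => if h : j ∈ Ti then z ⟨j, h⟩ else 0 with hu
    have husupp : ∀ j, u j ≠ 0 → j ∈ Ti := by
      intro j hj
      by_contra h
      exact hj (by simp [hu, dif_neg h])
    have hucard : {j | u j ≠ 0}.ncard ≤ R + K := by
      calc {j | u j ≠ 0}.ncard ≤ (↑Ti : Set (Fin N)).ncard :=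
            Set.ncard_le_ncard (fun j hj => husupp j hj) (Set.toFinite _)
        _ = Ti.card := Set.ncard_coe_finset Ti
        _ ≤ R := hTiR
        _ ≤ R + K := Nat.le_add_right R K
    have hPy : P *ᵥ y = A *ᵥ u := by
      have h1 : P *ᵥ y = colSub A Ti *ᵥ z := by
        rw [hPdef, ← Matrix.mulVec_mulVec, ← hz]
      rw [h1]
      funext i
      have h2 : (A *ᵥ u) i = ∑ j ∈ Ti, A i j * u j := by
        rw [show (A *ᵥ u) i = ∑ j, A i j * u j from by
          simp [Matrix.mulVec, dotProduct]]
        exact (Finset.sum_subset (Finset.subset_univ Ti)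
          (fun j _ hj => by simp [hu, dif_neg hj])).symm
      rw [h2]
      rw [show (colSub A Ti *ᵥ z) i = ∑ j' : {j // j ∈ Ti}, A i j'.1 * z j' from by
        simp [Matrix.mulVec, dotProduct, colSub, Matrix.submatrix_apply]]
      rw [Finset.univ_eq_attach]
      rw [← Finset.sum_attach Ti (fun j => A i j * u j)]
      refine Finset.sum_congr rfl fun j' _ => ?_
      have : u j'.1 = z j' := by simp [hu, dif_pos j'.2]
      rw [this]
    have hdisj : ∀ i, u i = 0 ∨ x i = 0 := by
      intro i
      by_cases h : i ∈ Ti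
      · right
        by_contra hxi
        exact (hx i hxi).2 h
      · left
        simp [hu, dif_neg h]
    have hcardux : {i | u i ≠ 0 ∨ x i ≠ 0}.ncard ≤ R + K := by
      have hsub : {i | u i ≠ 0 ∨ x i ≠ 0} ⊆ (↑Ti ∪ ↑T : Set (Fin N)) := by
        rintro i (h | h)
        · simp only [Set.mem_union, Finset.mem_coe]
          exact Or.inl (husupp i h)
        · simp only [Set.mem_union, Finset.mem_coe]
          exact Or.inr (hx i h).1
      calc {i | u i ≠ 0 ∨ x i ≠ 0}.ncard ≤ (↑Ti ∪ ↑T : Set (Fin N)).ncard :=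
            Set.ncard_le_ncard hsub (Set.toFinite _)
        _ ≤ (↑Ti : Set (Fin N)).ncard + (↑T : Set (Fin N)).ncard := Set.ncard_union_le _ _
        _ = Ti.card + T.card := by rw [Set.ncard_coe_finset, Set.ncard_coe_finset]
        _ ≤ R + K := add_le_add hTiR hTK
    have hIP : ∑ i, (A *ᵥ u) i * y i ≤ δ * vnorm u * vnorm x :=
      polar A δ hδ0 hRIP u x hdisj hcardux
    have hRIPu := (hRIP u hucard).1
    -- basic quantities
    set p := vnorm (P *ᵥ y) with hp
    set vy := vnorm y with hvy
    set vx := vnorm x with hvx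
    set vu := vnorm u with hvu
    have hp0 : 0 ≤ p := vnorm_nonneg _
    have hvy0 : 0 ≤ vy := vnorm_nonneg _
    have hvx0 : 0 ≤ vx := vnorm_nonneg _
    have hvu0 : 0 ≤ vu := vnorm_nonneg _
    rw [← hy] at hRIPx
    clear_value y z u p vy vx vu
    -- p^2 ≤ δ vu vx
    have hp2 : p ^ 2 ≤ δ * vu * vx := by
      have e1 : p ^ 2 = ∑ i, (P *ᵥ y) i ^ 2 := by rw [hp]; exact sq_vnorm _
      have e2 := proj_self P hPsym hPP y
      have e3 : ∑ i, (P *ᵥ y) i * y i = ∑ i, (A *ᵥ u) i * y i := by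
        refine Finset.sum_congr rfl fun i _ => ?_
        rw [hPy]
      rw [e1, e2, e3]
      exact hIP
    -- s * vu ≤ p
    have hsu : s * vu ≤ p := by
      refine le_of_sq_le_sq' hp0 ?_ (mul_nonneg (le_of_lt hs) hvu0)
      have e1 : (s * vu) ^ 2 = (1 - δ) * ∑ i, u i ^ 2 := by
        rw [mul_pow, hs2, hvu, sq_vnorm]
      have e2 : p ^ 2 = ∑ i, (A *ᵥ u) i ^ 2 := by
        rw [hp, hPy, sq_vnorm]
      rw [e1, e2]
      exact hRIPu
    -- s * vx ≤ vy
    have hsx : s * vx ≤ vy := by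
      refine le_of_sq_le_sq' hvy0 ?_ (mul_nonneg (le_of_lt hs) hvx0)
      have e1 : (s * vx) ^ 2 = (1 - δ) * ∑ i, x i ^ 2 := by
        rw [mul_pow, hs2, hvx, sq_vnorm]
      have e2 : vy ^ 2 = ∑ i, y i ^ 2 := by rw [hvy, sq_vnorm]
      rw [e1, e2]
      exact hRIPx
    -- (1-δ) p ≤ δ vy
    have hkey : (1 - δ) * p ≤ δ * vy := by
      have hmm : (s * vu) * (s * vx) ≤ p * vy :=
        mul_le_mul hsu hsx (mul_nonneg (le_of_lt hs) hvx0) hp0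
      have hmm2 : (1 - δ) * (vu * vx) ≤ p * vy := by
        have e : s * vu * (s * vx) = (1 - δ) * (vu * vx) := by rw [← hs2]; ring
        linarith [hmm, e.ge, e.le]
      have hq : (1 - δ) * p ^ 2 ≤ δ * (p * vy) := by nlinarith [hp2, hδ0, hδ1, hmm2]
      rcases eq_or_lt_of_le hp0 with h0 | h0
      · rw [← h0]
        have : 0 ≤ δ * vy := mul_nonneg hδ0 hvy0
        linarith
      · nlinarith [hq, h0]
    -- conclude
    have hA : vy - p ≤ vnorm (y - P *ᵥ y) := by
      rw [hvy, hp]; exact vnorm_sub_ge y (P *ᵥ y)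
    rw [hcdef, div_mul_eq_mul_div, div_le_iff₀ hs]
    set t := vnorm (y - P *ᵥ y) with ht
    clear_value t
    have hstep1 : s * ((1 - 2 * δ) * vy) ≤ s * ((1 - δ) * t) := by
      nlinarith [mul_le_mul_of_nonneg_left hA (le_of_lt hs),
        mul_le_mul_of_nonneg_left hkey (le_of_lt hs)]
    have hstep2 : s * (1 - 2 * δ) * (s * vx) ≤ s * (1 - 2 * δ) * vy :=
      mul_le_mul_of_nonneg_left hsx (mul_nonneg (le_of_lt hs) (le_of_lt h12))
    nlinarith [hstep1, hstep2, hs2, hδ1, hs]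
  -- columnwise bound for the signal part
  have main1 : c * frob Xout ≤ frob (A * Xout - P * (A * Xout)) := by
    refine frob_col_mono c hc0 Xout _ fun j => ?_
    set x := fun i => Xout i j with hxdef
    have hxsupp : ∀ i, x i ≠ 0 → (i ∈ T ∧ i ∉ Ti) := by
      intro i hi
      have hnot : i ∉ Ti ∧ X i j ≠ 0 := by
        by_cases h : i ∈ Ti
        · exfalso
          exact hi (by simp [hxdef, hXout, restrictRows, Set.indicator_apply,
            Set.mem_setOf_eq, h])
        · refine ⟨h, fun h0 => hi ?_⟩
          simp [hxdef, hXout, restrictRows, Set.indicator_apply, Set.mem_setOf_eq, h, h0]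
      exact ⟨hsupp i (fun h0 => hnot.2 (congrFun h0 j)), hnot.1⟩
    have hcol := colb x hxsupp
    have hsq := pow_le_pow_left₀ (mul_nonneg hc0 (vnorm_nonneg x)) hcol 2
    rw [mul_pow, sq_vnorm, sq_vnorm] at hsq
    have ecol : ∀ i, (A * Xout - P * (A * Xout)) i j = (A *ᵥ x - P *ᵥ (A *ᵥ x)) i := fun i => by
      rw [show P * (A * Xout) = P * A * Xout from (Matrix.mul_assoc P A Xout).symm,
        show P *ᵥ (A *ᵥ x) = (P * A) *ᵥ x from by rw [Matrix.mulVec_mulVec]]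
      simp [Matrix.sub_apply, Matrix.mul_apply, Matrix.mulVec, dotProduct, hxdef,
        Pi.sub_apply]
    calc c ^ 2 * ∑ i, Xout i j ^ 2 = c ^ 2 * ∑ i, x i ^ 2 := rfl
      _ ≤ ∑ i, (A *ᵥ x - P *ᵥ (A *ᵥ x)) i ^ 2 := hsq
      _ = ∑ i, (A * Xout - P * (A * Xout)) i j ^ 2 :=
          (Finset.sum_congr rfl fun i _ => by rw [ecol i]).symm
  -- contraction for the noise part
  have main2 : frob (W - P * W) ≤ frob W := by
    have h := frob_col_mono 1 zero_le_one (W - P * W) W (fun j => ?_)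
    · linarith [h, one_mul (frob (W - P * W))]
    rw [one_pow, one_mul]
    have e : ∀ i, (W - P * W) i j = W i j - (P *ᵥ fun k => W k j) i := fun i => by
      simp [Matrix.sub_apply, Matrix.mul_apply, Matrix.mulVec, dotProduct]
    calc ∑ i, (W - P * W) i j ^ 2 = ∑ i, (W i j - (P *ᵥ fun k => W k j) i) ^ 2 :=
          Finset.sum_congr rfl fun i _ => by rw [e i]
      _ ≤ ∑ i, W i j ^ 2 := proj_contract P hPsym hPP _
  rw [hGH]
  have tri := frob_add_ge (A * Xout - P * (A * Xout)) (W - P * W)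
  linarith
end

section
/- Let P be an orthogonal projection onto the column space of A_{T̂} (P = A_{T̂}A_{T̂}†). For any matrix Y ∈ ℝ^{M×L}, ‖Y − PY‖_F ≤ ‖Y‖_F. Moreover, if every column of Y lies in span(A_{T₁}) with T₁ ∩ T̂ = ∅ and A satisfies RIP with constant δ_{|T₁|+|T̂|} < 1/2, then ‖Y − PY‖_F ≥ (1 − δ_{|T₁|+|T̂|}/(1 − δ_{|T₁|+|T̂|}))·‖Y‖_F. -/
open scoped BigOperators
open Matrix

private lemma mul_col {m n l : Type*} [Fintype n] (Q : Matrix m n ℝ) (W : Matrix n l ℝ)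
    (i : m) (j : l) : (Q * W) i j = (Q *ᵥ (fun k => W k j)) i := by
  simp [Matrix.mul_apply, Matrix.mulVec, dotProduct]

private lemma sum_sq_lin' {ι : Type*} [Fintype ι] (u v : ι → ℝ) (s t : ℝ) :
    ∑ i, (s * u i + t * v i) ^ 2
      = s^2 * ∑ i, u i ^2 + 2*s*t * ∑ i, u i * v i + t^2 * ∑ i, v i ^2 := by
  simp only [Finset.mul_sum, ← Finset.sum_add_distrib]
  exact Finset.sum_congr rfl fun i _ => by ring

private lemma proj_dot' {M : ℕ} (P : Matrix (Fin M) (Fin M) ℝ)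
    (hPP : P * P = P) (hPt : Pᵀ = P) (y : Fin M → ℝ) :
    ∑ i, (P *ᵥ y) i ^ 2 = ∑ i, (P *ᵥ y) i * y i := by
  have h1 : (P *ᵥ y) ⬝ᵥ (P *ᵥ y) = (P *ᵥ y) ⬝ᵥ y := by
    rw [Matrix.dotProduct_mulVec]
    congr 1
    rw [← hPt, Matrix.vecMul_transpose, Matrix.mulVec_mulVec, hPt, hPP]
  simpa [dotProduct, pow_two] using h1

private lemma sum_sq_sub_eq' {M : ℕ} (P : Matrix (Fin M) (Fin M) ℝ)
    (hPP : P * P = P) (hPt : Pᵀ = P) (y : Fin M → ℝ) :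
    ∑ i, (y i - (P *ᵥ y) i) ^ 2 = ∑ i, (y i) ^ 2 - ∑ i, ((P *ᵥ y) i) ^ 2 := by
  have hpd := proj_dot' P hPP hPt y
  have h : ∀ i, (y i - (P *ᵥ y) i) ^ 2
      = (y i)^2 - 2 * ((P *ᵥ y) i * y i) + ((P *ᵥ y) i)^2 := fun i => by ring
  rw [Finset.sum_congr rfl fun i _ => h i, Finset.sum_add_distrib, Finset.sum_sub_distrib,
    ← Finset.mul_sum, ← hpd]
  ring

set_option maxHeartbeats 1000000 in
private lemma column_bound {M N : ℕ} (A : Matrix (Fin M) (Fin N) ℝ) (That T1 : Finset (Fin N))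
    (D : Matrix {j // j ∈ That} (Fin M) ℝ)
    (hPP : (colSub A That * D) * (colSub A That * D) = colSub A That * D)
    (hPt : (colSub A That * D)ᵀ = colSub A That * D)
    (δ : ℝ) (hδ0 : 0 ≤ δ) (hδ : δ < 1/2)
    (hRIP : RIP A (T1.card + That.card) δ)
    (hdisj : Disjoint T1 That)
    (z : Fin N → ℝ) (hz : ∀ i, z i ≠ 0 → i ∈ T1) :
    (1 - δ / (1 - δ))^2 * ∑ i, (A *ᵥ z) i ^ 2
      ≤ ∑ i, ((A *ᵥ z) i - ((colSub A That * D) *ᵥ (A *ᵥ z)) i) ^ 2 := by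
  classical
  set B := colSub A That with hB
  set P := B * D with hPdef
  set y : Fin M → ℝ := A *ᵥ z with hy
  set p : Fin M → ℝ := P *ᵥ y with hp
  set xh : Fin N → ℝ := fun j => if h : j ∈ That then (D *ᵥ y) ⟨j, h⟩ else 0 with hxh
  have h1δ : (0:ℝ) < 1 - δ := by linarith
  -- A *ᵥ xh = p
  have hAx : A *ᵥ xh = p := by
    funext i
    have hps : p i = ∑ j : {j // j ∈ That}, B i j * (D *ᵥ y) j := by
      rw [hp, hPdef, ← Matrix.mulVec_mulVec]
      simp [Matrix.mulVec, dotProduct]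
    have hzero : ∀ j ∈ Finset.univ, j ∉ That → A i j * xh j = 0 := by
      intro j _ hj; simp [hxh, hj]
    have hsum : (A *ᵥ xh) i = ∑ j ∈ That, A i j * xh j := by
      rw [Matrix.mulVec, dotProduct]
      exact (Finset.sum_subset (Finset.subset_univ That) hzero).symm
    rw [hsum, hps, Finset.univ_eq_attach,
      show (∑ j ∈ That.attach, B i j * (D *ᵥ y) j) = ∑ j ∈ That.attach, A i ↑j * xh ↑j from
        Finset.sum_congr rfl (fun a _ => by simp [hxh, hB, colSub, a.2]),
      Finset.sum_attach That (fun j => A i j * xh j)]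
  -- abbreviations
  have ha0 : (0:ℝ) ≤ ∑ j, xh j ^ 2 := Finset.sum_nonneg fun j _ => sq_nonneg _
  have hb0 : (0:ℝ) ≤ ∑ j, z j ^ 2 := Finset.sum_nonneg fun j _ => sq_nonneg _
  have hnc : ∀ (s t : ℝ), ({j | s * xh j + t * z j ≠ 0} : Set (Fin N)).ncard
      ≤ T1.card + That.card := by
    intro s t
    have hsub : {j | s * xh j + t * z j ≠ 0} ⊆ ↑(T1 ∪ That) := by
      intro j hj
      simp only [Set.mem_setOf_eq] at hj
      by_contra hmem
      simp only [Finset.coe_union, Set.mem_union, Finset.mem_coe] at hmem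
      push_neg at hmem
      have hxj : xh j = 0 := by simp [hxh, hmem.2]
      have hzj : z j = 0 := by by_contra h; exact hmem.1 (hz j h)
      rw [hxj, hzj] at hj; simp at hj
    calc ({j | s * xh j + t * z j ≠ 0}).ncard ≤ (↑(T1 ∪ That) : Set (Fin N)).ncard :=
          Set.ncard_le_ncard hsub (T1 ∪ That).finite_toSet
      _ = (T1 ∪ That).card := Set.ncard_coe_finset _
      _ ≤ T1.card + That.card := Finset.card_union_le _ _
  have hlin : ∀ (s t : ℝ), A *ᵥ (fun j => s * xh j + t * z j)
      = fun i => s * (A *ᵥ xh) i + t * y i := by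
    intro s t; funext i
    simp only [hy, Matrix.mulVec, dotProduct]
    rw [Finset.mul_sum, Finset.mul_sum, ← Finset.sum_add_distrib]
    exact Finset.sum_congr rfl fun j _ => by ring
  have hxz : ∑ j, xh j * z j = 0 := Finset.sum_eq_zero fun j _ => by
    by_cases hj : j ∈ That
    · have hzj : z j = 0 := by
        by_contra h
        exact (Finset.disjoint_left.mp hdisj (hz j h)) hj
      rw [hzj, mul_zero]
    · simp [hxh, hj]
  have hAsum : ∀ s t : ℝ, ∑ i, (A *ᵥ (fun j => s * xh j + t * z j)) i ^ 2
      = s^2 * (∑ i, (A *ᵥ xh) i ^2) + 2*s*t*(∑ i, (A *ᵥ xh) i * y i)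
        + t^2 * (∑ i, y i ^2) := by
    intro s t
    calc ∑ i, (A *ᵥ (fun j => s * xh j + t * z j)) i ^ 2
        = ∑ i, (s * (A *ᵥ xh) i + t * y i)^2 :=
          Finset.sum_congr rfl fun i _ => by rw [hlin s t]
      _ = _ := sum_sq_lin' (A *ᵥ xh) y s t
  have hvsum : ∀ s t : ℝ, ∑ j, (s * xh j + t * z j)^2
      = s^2 * (∑ j, xh j ^2) + t^2 * (∑ j, z j ^2) := by
    intro s t; rw [sum_sq_lin' xh z s t, hxz]; ring
  have key : ∀ s t : ℝ, 2*s*t*(∑ i, (A *ᵥ xh) i * y i)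
      ≤ δ * (s^2 * (∑ j, xh j ^2) + t^2 * (∑ j, z j ^2)) := by
    intro s t
    have h1 := (hRIP _ (hnc s t)).2
    have h2 := (hRIP _ (hnc s (-t))).1
    rw [hAsum s t, hvsum s t] at h1
    rw [hAsum s (-t), hvsum s (-t)] at h2
    nlinarith [h1, h2]
  -- the projection identity
  have hpd : ∑ i, p i ^ 2 = ∑ i, p i * y i := by
    have := proj_dot' P hPP hPt y
    rw [← hp] at this; exact this
  have hup : ∑ i, (A *ᵥ xh) i ^ 2 = ∑ i, (A *ᵥ xh) i * y i := by
    rw [hAx]; exact hpd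
  have hc0 : (0:ℝ) ≤ ∑ i, (A *ᵥ xh) i * y i := by
    rw [← hup]; exact Finset.sum_nonneg fun i _ => sq_nonneg _
  have hac : (1 - δ) * (∑ j, xh j ^2) ≤ ∑ i, (A *ᵥ xh) i * y i := by
    have h := (hRIP xh (by simpa using hnc 1 0)).1
    rw [hup] at h; exact h
  have hbV : (1 - δ) * (∑ j, z j ^2) ≤ ∑ i, y i ^ 2 := by
    have h := (hRIP z (by simpa using hnc 0 1)).1
    rw [← hy] at h; exact h
  have hS0 : (0:ℝ) ≤ ∑ i, y i ^ 2 := Finset.sum_nonneg fun i _ => sq_nonneg _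
  have hquad : ∀ x : ℝ, 0 ≤ (δ * ∑ j, z j ^ 2) * (x * x)
      + (-(2 * (∑ i, (A *ᵥ xh) i * y i))) * x + δ * (∑ j, xh j ^ 2) := by
    intro x
    have h := key 1 x
    nlinarith [h]
  have hdisc := discrim_le_zero hquad
  rw [discrim] at hdisc
  have hce : (∑ i, (A *ᵥ xh) i * y i)^2
      ≤ δ^2 * ((∑ j, xh j ^ 2) * (∑ j, z j ^ 2)) := by nlinarith [hdisc]
  have hcb : (∑ i, (A *ᵥ xh) i * y i) * (1 - δ) ≤ δ^2 * (∑ j, z j ^2) := by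
    rcases hc0.eq_or_lt with hC | hC
    · rw [← hC, zero_mul]; positivity
    · nlinarith [hce, hac, hC, hb0,
        mul_le_mul_of_nonneg_left hac (by positivity : (0:ℝ) ≤ δ^2 * (∑ j, z j ^2))]
  have hsub : ∑ i, (y i - p i) ^ 2 = ∑ i, y i ^ 2 - ∑ i, p i ^ 2 := by
    have h := sum_sq_sub_eq' P hPP hPt y
    rw [← hp] at h; exact h
  have hpC : ∑ i, p i ^ 2 = ∑ i, (A *ᵥ xh) i * y i := by
    rw [← hAx]; exact hup
  rw [hsub, hpC]
  rw [show (1 - δ/(1-δ)) = (1-2*δ)/(1-δ) by field_simp; ring, div_pow,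
    div_mul_eq_mul_div, div_le_iff₀ (by positivity : (0:ℝ) < (1-δ)^2)]
  nlinarith [mul_le_mul_of_nonneg_right hcb h1δ.le,
    mul_le_mul_of_nonneg_left hbV (sq_nonneg δ),
    mul_nonneg (mul_nonneg hδ0 (by linarith : (0:ℝ) ≤ 1-2*δ)) hS0]

theorem stmt16 {M N L : ℕ} (A : Matrix (Fin M) (Fin N) ℝ) (That T1 : Finset (Fin N))
    (D : Matrix {j // j ∈ That} (Fin M) ℝ) (hD : IsPinv (colSub A That) D)
    (δ : ℝ) (hδ0 : 0 ≤ δ) (hδ : δ < 1/2)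
    (hRIP : RIP A (T1.card + That.card) δ)
    (hdisj : Disjoint T1 That) :
    (∀ Y : Matrix (Fin M) (Fin L) ℝ, frob (Y - colSub A That * (D * Y)) ≤ frob Y) ∧
    (∀ Y : Matrix (Fin M) (Fin L) ℝ,
      (∃ Z : Matrix (Fin N) (Fin L) ℝ, (∀ i, Z i ≠ 0 → i ∈ T1) ∧ Y = A * Z) →
      (1 - δ / (1 - δ)) * frob Y ≤ frob (Y - colSub A That * (D * Y))) := by
  classical
  obtain ⟨h1, h2, h3, h4⟩ := hD
  set B := colSub A That with hB
  have hPP : (B * D) * (B * D) = B * D := by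
    rw [Matrix.mul_assoc, ← Matrix.mul_assoc D B D, h2]
  have hPt : (B * D)ᵀ = B * D := h3
  constructor
  · intro Y
    rw [← Matrix.mul_assoc]
    unfold frob
    apply Real.sqrt_le_sqrt
    calc ∑ i, ∑ j, ((Y - B * D * Y) i j)^2
        = ∑ j, ∑ i, ((Y - B * D * Y) i j)^2 := Finset.sum_comm
      _ ≤ ∑ j, ∑ i, (Y i j)^2 := by
          apply Finset.sum_le_sum
          intro j _
          have h := sum_sq_sub_eq' (B * D) hPP hPt (fun k => Y k j)
          have hnn : 0 ≤ ∑ i, ((B * D) *ᵥ (fun k => Y k j)) i ^ 2 :=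
            Finset.sum_nonneg fun i _ => sq_nonneg _
          calc ∑ i, ((Y - B * D * Y) i j)^2
              = ∑ i, (Y i j - ((B * D) *ᵥ (fun k => Y k j)) i)^2 := by
                apply Finset.sum_congr rfl
                intro i _
                rw [Matrix.sub_apply, mul_col (B * D) Y]
            _ ≤ ∑ i, (Y i j)^2 := by rw [h]; linarith
      _ = ∑ i, ∑ j, (Y i j)^2 := Finset.sum_comm
  · rintro Y ⟨Z, hZ, rfl⟩
    have h1δ : (0:ℝ) < 1 - δ := by linarith
    have hcf0 : 0 ≤ 1 - δ / (1 - δ) := by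
      rw [sub_nonneg, div_le_one h1δ]; linarith
    rw [← Matrix.mul_assoc]
    have hcols : ∀ j, (1 - δ/(1-δ))^2 * ∑ i, ((A * Z) i j)^2
        ≤ ∑ i, ((A * Z - B * D * (A * Z)) i j)^2 := by
      intro j
      have h := column_bound A That T1 D hPP hPt δ hδ0 hδ hRIP hdisj (fun k => Z k j)
        (fun i hi => hZ i (fun hc => hi (by simp [hc])))
      have hcolAZ : (fun k => (A * Z) k j) = A *ᵥ (fun k => Z k j) :=
        funext fun k => mul_col A Z k j
      calc (1 - δ/(1-δ))^2 * ∑ i, ((A * Z) i j)^2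
          = (1 - δ/(1-δ))^2 * ∑ i, (A *ᵥ (fun k => Z k j)) i ^ 2 := by
            congr 1
        _ ≤ ∑ i, ((A *ᵥ (fun k => Z k j)) i
              - ((B * D) *ᵥ (A *ᵥ (fun k => Z k j))) i)^2 := h
        _ = ∑ i, ((A * Z - B * D * (A * Z)) i j)^2 := by
            apply Finset.sum_congr rfl
            intro i _
            rw [Matrix.sub_apply, mul_col (B * D) (A * Z), hcolAZ, mul_col A Z]
    unfold frob
    calc (1 - δ/(1-δ)) * Real.sqrt (∑ i, ∑ j, ((A * Z) i j)^2)
        = Real.sqrt ((1 - δ/(1-δ))^2 * ∑ i, ∑ j, ((A * Z) i j)^2) := by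
          rw [Real.sqrt_mul (by positivity), Real.sqrt_sq hcf0]
      _ ≤ Real.sqrt (∑ i, ∑ j, ((A * Z - B * D * (A * Z)) i j)^2) := by
          apply Real.sqrt_le_sqrt
          have e1 : ∑ i, ∑ j, ((A * Z) i j)^2 = ∑ j, ∑ i, ((A * Z) i j)^2 :=
            Finset.sum_comm
          have e2 : ∑ i, ∑ j, ((A * Z - B * D * (A * Z)) i j)^2
              = ∑ j, ∑ i, ((A * Z - B * D * (A * Z)) i j)^2 := Finset.sum_comm
          rw [e1, e2, Finset.mul_sum]
          exact Finset.sum_le_sum fun j _ => hcols j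
end
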